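/- Every monoidal (commutative) monad T on Set preserves linear equations: if L is a signature, V a type of variables, and t₁, t₂ are L-terms over V such that every variable occurring in t₁ or t₂ occurs exactly once in t₁ and exactly once in t₂, then T preserves the equation t₁ = t₂. -/

import Mathlib

open FirstOrder FirstOrder.Language

universe u v w

/-- canonical n-ary sequencing ψⁿ obtained from ψ -/
def seqFin {T : Type u → Type u} [Monad T] {A : Type u} :
    {n : ℕ} → (Fin n → T A) → T (Fin n → A)
  | 0, _ => pure (fun i => i.elim0)
  | _ + 1, xs => (fun a f => Fin.cons a f) <$> xs 0 <*> seqFin (fun i => xs i.succ)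

open Classical in
noncomputable def occCount {L : Language} {V : Type*} (v : V) : L.Term V → ℕ
  | .var w => if w = v then 1 else 0
  | .func _ ts => ∑ i, occCount v (ts i)

/-- the lifted structure on `T A` -/
def liftedStructure (T : Type u → Type u) [Monad T] {L : Language} {A : Type u}
    [L.Structure A] : L.Structure (T A) where
  funMap f xs := Structure.funMap f <$> seqFin xs
  RelMap _ _ := False

/-- T preserves the equation t₁ = t₂ -/
def Preserves (T : Type u → Type u) [Monad T] {L : Language} {V : Type*}
    (t₁ t₂ : L.Term V) : Prop :=
  ∀ (A : Type u) (_ : L.Structure A),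
    (∀ val : V → A, t₁.realize val = t₂.realize val) →
    ∀ val : V → T A,
      @Term.realize L (T A) (liftedStructure T) V val t₁ =
      @Term.realize L (T A) (liftedStructure T) V val t₂

/-- the equation t₁ = t₂ is linear: every variable occurring in t₁ or t₂ occurs
exactly once in t₁ and exactly once in t₂. -/
def Linear {L : Language} {V : Type w} (t₁ t₂ : L.Term V) : Prop :=
  ∀ v : V, (occCount v t₁ ≠ 0 ∨ occCount v t₂ ≠ 0) →
    occCount v t₁ = 1 ∧ occCount v t₂ = 1

/-!
Push the lifted realization into `Option A` along `some`. For a term `t` in which no variable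
occurs twice, `some <$> t.realize xs` is the lifted `Option`-realization of `t` mapped over the
random partial valuation obtained by sequencing `xs` along the variables of `t` in order of
occurrence. Commutativity of `T` makes this partial valuation independent of the order, so for a
linear equation both sides are mapped over the same one. It remains to compare the
`Option`-realizations of `t₁` and `t₂` at a fixed partial valuation: if it is undefined at some
variable both are `none`, and otherwise both are `some` of the realizations in `A`.
-/

namespace FirstOrder.Language.Term

variable {L : Language} {V : Type*}

def varList : L.Term V → List V
  | var v => [v]
  | func _ ts => (List.ofFn fun i => (ts i).varList).flatten

@[simp] lemma varList_var (v : V) : (var v : L.Term V).varList = [v] := rfl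

@[simp] lemma varList_func {m : ℕ} (f : L.Functions m) (ts : Fin m → L.Term V) :
    (func f ts).varList = (List.ofFn fun i => (ts i).varList).flatten := rfl

lemma mem_varList_func {v : V} {m : ℕ} {f : L.Functions m} {ts : Fin m → L.Term V} :
    v ∈ (func f ts).varList ↔ ∃ i, v ∈ (ts i).varList := by
  simp [List.mem_flatten]

lemma occCount_eq_count_varList [DecidableEq V] (v : V) (t : L.Term V) :
    occCount v t = t.varList.count v := by
  induction t with
  | var w => simp [occCount, List.count_singleton]
  | func f ts ih => simp [occCount, ih, List.count_flatten, List.sum_ofFn]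

lemma varList_relabel {W : Type*} (e : V → W) (t : L.Term V) :
    (t.relabel e).varList = t.varList.map e := by
  induction t with
  | var v => rfl
  | func f ts ih => simp [relabel, ih, List.map_flatten, List.map_ofFn, Function.comp_def]

lemma exists_relabel_eq {W : Type*} {e : W → V} (t : L.Term V)
    (h : ∀ v ∈ t.varList, v ∈ Set.range e) : ∃ t' : L.Term W, t'.relabel e = t := by
  induction t with
  | var v =>
    obtain ⟨w, rfl⟩ := h v (by simp)
    exact ⟨var w, rfl⟩
  | func f ts ih =>
    choose ts' hts' using fun i => ih i fun v hv => h v (mem_varList_func.2 ⟨i, hv⟩)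
    exact ⟨func f ts', by simp [relabel, hts']⟩

lemma realize_congr {M : Type*} [L.Structure M] {xs ys : V → M} (t : L.Term V)
    (h : ∀ v ∈ t.varList, xs v = ys v) : t.realize xs = t.realize ys := by
  induction t with
  | var v => exact h v (by simp)
  | func f ts ih =>
    simp only [realize]
    congr 1
    exact funext fun i => ih i fun v hv => h v (mem_varList_func.2 ⟨i, hv⟩)

end FirstOrder.Language.Term

open Term

section Linear

variable {L : Language} {V : Type*} {t₁ t₂ : L.Term V}

lemma Linear.nodup_varList (h : Linear t₁ t₂) : t₁.varList.Nodup := by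
  classical
  refine List.nodup_iff_count_le_one.2 fun v => ?_
  rw [← occCount_eq_count_varList]
  by_cases hv : occCount v t₁ = 0
  · omega
  · exact (h v (Or.inl hv)).1.le

lemma Linear.varList_perm (h : Linear t₁ t₂) : t₁.varList.Perm t₂.varList := by
  classical
  refine List.perm_iff_count.2 fun v => ?_
  rw [← occCount_eq_count_varList, ← occCount_eq_count_varList]
  by_cases hv : occCount v t₁ ≠ 0 ∨ occCount v t₂ ≠ 0
  · rw [(h v hv).1, (h v hv).2]
  · simp only [not_or, not_not] at hv
    rw [hv.1, hv.2]

lemma Linear.of_relabel {W : Type*} {e : V → W} (he : Function.Injective e)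
    (h : Linear (t₁.relabel e) (t₂.relabel e)) : Linear t₁ t₂ := by
  classical
  intro v
  simpa only [occCount_eq_count_varList, varList_relabel, List.count_map_of_injective _ _ he]
    using h (e v)

end Linear

section Sequencing

variable {T : Type u → Type u} [Monad T] [LawfulMonad T] {A B : Type u}

lemma seqFin_pure : ∀ {n : ℕ} (h : Fin n → A), seqFin (fun i => (pure (h i) : T A)) = pure h
  | 0, h => congrArg pure (funext fun i => i.elim0)
  | n + 1, h => by
    simp only [seqFin, seqFin_pure (n := n), map_pure, seq_pure]
    exact congrArg pure (Fin.cons_self_tail h)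

lemma seqFin_map : ∀ {n : ℕ} (f : Fin n → A → B) (xs : Fin n → T A),
    seqFin (fun i => f i <$> xs i) = (fun h i => f i (h i)) <$> seqFin xs
  | 0, f, xs => by
    simp only [seqFin, map_pure]
    exact congrArg pure (funext fun i => i.elim0)
  | n + 1, f, xs => by
    simp only [seqFin, seqFin_map (n := n) (fun i => f i.succ), map_seq, seq_map_assoc,
      Functor.map_map]
    congr 2
    funext a h
    exact funext (Fin.cases rfl fun _ => rfl)

lemma seqFin_option_eq_none : ∀ {n : ℕ} (os : Fin n → Option A) (i : Fin n), os i = none →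
    seqFin os = none
  | n + 1, os, i, h => by
    rcases i.eq_zero_or_eq_succ with rfl | ⟨j, rfl⟩
    · simp only [seqFin, h]
      rfl
    · simp only [seqFin, seqFin_option_eq_none (fun j => os j.succ) j h]
      cases os 0 <;> rfl

lemma map_some_injective {x y : T A} (h : some <$> x = some <$> y) : x = y := by
  simpa using congrArg (· >>= fun o => o.elim x pure) h

end Sequencing

section PartialValuation

variable {T : Type u → Type u} [Monad T] [LawfulMonad T] {A : Type u} {V : Type} [DecidableEq V]

def partialValuation (xs : V → T A) : List V → T (V → Option A)
  | [] => pure fun _ => none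
  | v :: l => (fun a g => Function.update g v (some a)) <$> xs v <*> partialValuation xs l

lemma partialValuation_append (xs : V → T A) (l₁ l₂ : List V) :
    partialValuation xs (l₁ ++ l₂) =
      (fun g₁ g₂ v => if v ∈ l₁ then g₁ v else g₂ v) <$> partialValuation xs l₁ <*>
        partialValuation xs l₂ := by
  induction l₁ with
  | nil => simp [partialValuation]
  | cons w l₁ ih =>
    simp only [List.cons_append, partialValuation, ih, seq_assoc, Functor.map_map, seq_map_assoc,
      map_seq, Function.comp_def]
    congr 3
    funext a g₁ g₂ v
    by_cases hv : v = w
    · subst hv; simp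
    · by_cases h : v ∈ l₁ <;> simp [hv, h]

lemma partialValuation_flatten {B : Type u} (xs : V → T A) : ∀ {m : ℕ} (ls : Fin m → List V)
    (G : Fin m → (V → Option A) → B), (List.ofFn ls).flatten.Nodup →
    (∀ i g g', (∀ v ∈ ls i, g v = g' v) → G i g = G i g') →
    (fun g i => G i g) <$> partialValuation xs (List.ofFn ls).flatten =
      seqFin fun i => G i <$> partialValuation xs (ls i)
  | 0, ls, G, _, _ => by
    simp only [List.ofFn_zero, List.flatten_nil, partialValuation, map_pure, seqFin]
    exact congrArg pure (funext fun i => i.elim0)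
  | m + 1, ls, G, hnd, hG => by
    rw [List.ofFn_succ, List.flatten_cons] at hnd ⊢
    obtain ⟨-, hnd_tail, hdisj⟩ := List.nodup_append.1 hnd
    rw [partialValuation_append, seqFin,
      ← partialValuation_flatten xs (fun i => ls i.succ) (fun i => G i.succ) hnd_tail
        fun i => hG i.succ]
    simp only [map_seq, seq_map_assoc, Functor.map_map, Function.comp_def]
    congr 2
    funext g₁ g₂
    refine funext (Fin.cases ?_ fun j => ?_)
    · exact hG 0 _ _ fun v hv => if_pos hv
    · refine hG j.succ _ _ fun v hv => if_neg fun hv₀ => hdisj v hv₀ v ?_ rfl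
      exact List.mem_flatten.2 ⟨_, List.mem_ofFn.2 ⟨j, rfl⟩, hv⟩

end PartialValuation

section Commutative

variable {T : Type u → Type u} [Monad T] [CommApplicative T]

lemma map_seq_map_seq_comm {α β σ : Type u} (x : T α) (y : T β) (z : T σ)
    (F : α → σ → σ) (G : β → σ → σ) (hFG : ∀ a b, F a ∘ G b = G b ∘ F a) :
    F <$> x <*> (G <$> y <*> z) = G <$> y <*> (F <$> x <*> z) := by
  simp only [seq_assoc, Functor.map_map, seq_map_assoc]
  rw [CommApplicative.commutative_map]
  congr 3
  exact funext fun b => funext fun a => hFG a b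

lemma partialValuation_perm {A : Type u} {V : Type} [DecidableEq V] (xs : V → T A)
    {l₁ l₂ : List V} (hp : l₁.Perm l₂) (hnd : l₁.Nodup) :
    partialValuation xs l₁ = partialValuation xs l₂ := by
  induction hp with
  | nil => rfl
  | cons v _ ih => simp only [partialValuation, ih hnd.of_cons]
  | swap v w l =>
    have hvw : v ≠ w := by
      rintro rfl
      simp at hnd
    refine map_seq_map_seq_comm _ _ _ _ _ fun a b => funext fun g => ?_
    exact Function.update_comm hvw _ _ g
  | trans h₁₂ _ ih₁₂ ih₂₃ => rw [ih₁₂ hnd, ih₂₃ (h₁₂.nodup_iff.1 hnd)]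

end Commutative

section Lifted

attribute [local instance] liftedStructure

variable {L : Language} {T : Type u → Type u} [Monad T] {A : Type u} [L.Structure A]

lemma funMap_lifted {n : ℕ} (f : L.Functions n) (xs : Fin n → T A) :
    Structure.funMap f xs = Structure.funMap f <$> seqFin xs := rfl

variable [LawfulMonad T]

lemma realize_lifted_pure {V : Type*} (t : L.Term V) (val : V → A) :
    t.realize (fun v => (pure (val v) : T A)) = pure (t.realize val) := by
  induction t with
  | var v => rfl
  | func f ts ih => simp only [realize, ih, funMap_lifted, seqFin_pure, map_pure]

lemma realize_option_eq_none {V : Type*} (t : L.Term V) {g : V → Option A} {v : V}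
    (hv : v ∈ t.varList) (hg : g v = none) : t.realize g = none := by
  induction t with
  | var w => simp_all
  | func f ts ih =>
    obtain ⟨i, hi⟩ := mem_varList_func.1 hv
    rw [realize, funMap_lifted (T := Option), seqFin_option_eq_none _ i (ih i hi)]
    rfl

lemma realize_option_eq_of_forall_realize_eq {V : Type*} {t₁ t₂ : L.Term V}
    (heq : ∀ val : V → A, t₁.realize val = t₂.realize val)
    (hmem : ∀ v, v ∈ t₁.varList ↔ v ∈ t₂.varList) (g : V → Option A) :
    t₁.realize g = t₂.realize g := by
  rcases isEmpty_or_nonempty A with hA | ⟨⟨a⟩⟩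
  · exact Subsingleton.elim _ _
  by_cases hnone : ∃ v ∈ t₁.varList, g v = none
  · obtain ⟨v, hv, hg⟩ := hnone
    rw [realize_option_eq_none t₁ hv hg, realize_option_eq_none t₂ ((hmem v).1 hv) hg]
  · simp only [not_exists, not_and] at hnone
    have hg : ∀ v ∈ t₁.varList, g v = pure ((g v).getD a) := fun v hv => by
      cases h : g v
      · exact absurd h (hnone v hv)
      · rfl
    rw [realize_congr t₁ hg, realize_congr t₂ fun v hv => hg v ((hmem v).2 hv),
      realize_lifted_pure, realize_lifted_pure, heq]

theorem map_some_realize_lifted {V : Type} [DecidableEq V] (xs : V → T A) (t : L.Term V)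
    (hnd : t.varList.Nodup) :
    some <$> t.realize xs =
      (fun g : V → Option A => t.realize g) <$> partialValuation xs t.varList := by
  induction t with
  | var v => simp [partialValuation, realize]
  | func f ts ih =>
    have hnd_i : ∀ i, (ts i).varList.Nodup := fun i =>
      (List.nodup_flatten.1 hnd).1 _ (List.mem_ofFn.2 ⟨i, rfl⟩)
    calc some <$> (func f ts).realize xs
        = (fun os => Structure.funMap f <$> seqFin os) <$>
            seqFin (fun i => some <$> (ts i).realize xs) := by
          rw [seqFin_map, Functor.map_map, realize, funMap_lifted, Functor.map_map]
          congr 1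
          funext h
          exact (congrArg (Structure.funMap f <$> ·) (seqFin_pure (T := Option) h)).symm
      _ = (fun os => Structure.funMap f <$> seqFin os) <$>
            ((fun g i => (ts i).realize g) <$> partialValuation xs (func f ts).varList) := by
          simp only [fun i => ih i (hnd_i i)]
          rw [varList_func, partialValuation_flatten xs _ _ hnd
            fun i g g' h => realize_congr (ts i) h]
      _ = (fun g : V → Option A => (func f ts).realize g) <$>
            partialValuation xs (func f ts).varList := by
          rw [Functor.map_map]
          rfl

end Lifted

section Preservation

attribute [local instance] liftedStructure

variable {T : Type u → Type u} [Monad T] {L : Language}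

theorem Preserves.relabel {V W : Type*} {t₁ t₂ : L.Term V} {e : V → W}
    (he : Function.Injective e) (h : Preserves T t₁ t₂) :
    Preserves T (t₁.relabel e) (t₂.relabel e) := by
  intro A _ heq xs
  have heq' (val : V → A) : t₁.realize val = t₂.realize val := by
    simpa only [realize_relabel, Function.extend_comp he]
      using heq (Function.extend e val fun _ => t₁.realize val)
  simpa only [realize_relabel] using h A _ heq' (xs ∘ e)

-- `V : Type` keeps the partial valuations `T (V → Option A)` inside `Type u`.
theorem Linear.preserves_type_zero [LawfulMonad T] [CommApplicative T] {V : Type}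
    {t₁ t₂ : L.Term V} (hlin : Linear t₁ t₂) : Preserves T t₁ t₂ := by
  classical
  intro A _ heq xs
  have hnd := hlin.nodup_varList
  have hperm := hlin.varList_perm
  have hoption : (fun g : V → Option A => t₁.realize g) = fun g => t₂.realize g :=
    funext (realize_option_eq_of_forall_realize_eq heq fun _ => hperm.mem_iff)
  apply map_some_injective
  rw [map_some_realize_lifted xs t₁ hnd, map_some_realize_lifted xs t₂ (hperm.nodup_iff.1 hnd),
    hoption, partialValuation_perm xs hperm hnd]

end Preservation

theorem monoidal_preserves_linear_general
    (T : Type u → Type u) [Monad T] [LawfulMonad T] [CommApplicative T]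
    (L : Language) (V : Type w)
    (t₁ t₂ : L.Term V)
    (hlin : Linear t₁ t₂) :
    Preserves T t₁ t₂ := by
  obtain ⟨n, e, he, hrange⟩ :
      ∃ (n : ℕ) (e : Fin n → V), Function.Injective e ∧ ∀ v ∈ t₁.varList, v ∈ Set.range e :=
    ⟨_, _, List.nodup_iff_injective_get.1 hlin.nodup_varList, fun _ => List.mem_iff_get.1⟩
  obtain ⟨t₂', rfl⟩ := t₂.exists_relabel_eq fun v hv => hrange v (hlin.varList_perm.mem_iff.2 hv)
  obtain ⟨t₁', rfl⟩ := t₁.exists_relabel_eq hrange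
  exact (hlin.of_relabel he).preserves_type_zero.relabel he

/-- every monoidal monad preserves linear equations. -/
theorem monoidal_preserves_linear
    (T : Type u → Type u) [Monad T] [LawfulMonad T] [CommApplicative T]
    (L : Language) [∀ n, IsEmpty (L.Relations n)] (V : Type w)
    (t₁ t₂ : L.Term V)
    (hlin : Linear t₁ t₂) :
    Preserves T t₁ t₂ :=
  monoidal_preserves_linear_general T L V t₁ t₂ hlin
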